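/- For all α, β ∈ ℂ and all positive integers m, n: σ_{α,β}(nm) = ∑_{d ∣ gcd(n,m)} μ(d) d^{−α−β} σ_{α,β}(n/d) σ_{α,β}(m/d), where μ is the Möbius function. -/
import Mathlib


open Complex

/-- `σ_{α,β}(n) = ∑_{ad=n} a^{-α} d^{-β}`. -/
noncomputable def sigmaC (α β : ℂ) (n : ℕ) : ℂ :=
  ∑ d ∈ n.divisors, ((n / d : ℕ) : ℂ) ^ (-α) * (d : ℂ) ^ (-β)

section Helpers

lemma natCast_mul_cpow (a b : ℕ) (z : ℂ) :
    ((a * b : ℕ) : ℂ) ^ z = (a : ℂ) ^ z * (b : ℂ) ^ z := by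
  rw [Nat.cast_mul, show ((a : ℕ) : ℂ) = ((a : ℝ) : ℂ) by norm_cast,
    show ((b : ℕ) : ℂ) = ((b : ℝ) : ℂ) by norm_cast]
  exact Complex.mul_cpow_ofReal_nonneg (Nat.cast_nonneg a) (Nat.cast_nonneg b) z

lemma natCast_pow_cpow (p j : ℕ) (z : ℂ) :
    ((p ^ j : ℕ) : ℂ) ^ z = ((p : ℂ) ^ z) ^ j := by
  induction j with
  | zero => simp
  | succ j ih => rw [pow_succ, natCast_mul_cpow, ih, pow_succ]

lemma sum_divisors_coprime_mul {M : Type*} [AddCommMonoid M] {m n : ℕ} (h : Nat.Coprime m n)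
    (f : ℕ → M) :
    ∑ d ∈ (m * n).divisors, f d = ∑ a ∈ m.divisors, ∑ b ∈ n.divisors, f (a * b) := by
  rw [← Finset.sum_product']
  refine Finset.sum_nbij' (fun d => (Nat.gcd d m, Nat.gcd d n)) (fun p => p.1 * p.2)
    ?_ ?_ ?_ ?_ ?_
  · intro d hd
    rw [Nat.mem_divisors] at hd
    have hm : m ≠ 0 := fun h0 => hd.2 (by rw [h0, zero_mul])
    have hn : n ≠ 0 := fun h0 => hd.2 (by rw [h0, mul_zero])
    exact Finset.mem_product.mpr ⟨Nat.mem_divisors.mpr ⟨Nat.gcd_dvd_right d m, hm⟩,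
      Nat.mem_divisors.mpr ⟨Nat.gcd_dvd_right d n, hn⟩⟩
  · rintro ⟨a, b⟩ hab
    rw [Finset.mem_product, Nat.mem_divisors, Nat.mem_divisors] at hab
    exact Nat.mem_divisors.mpr ⟨mul_dvd_mul hab.1.1 hab.2.1, mul_ne_zero hab.1.2 hab.2.2⟩
  · intro d hd
    rw [Nat.mem_divisors] at hd
    exact (Nat.gcd_mul_gcd_eq_iff_dvd_mul_of_coprime h).mpr hd.1
  · rintro ⟨a, b⟩ hab
    rw [Finset.mem_product, Nat.mem_divisors, Nat.mem_divisors] at hab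
    have hbm : Nat.Coprime b m := Nat.Coprime.coprime_dvd_left hab.2.1 h.symm
    have han : Nat.Coprime a n := Nat.Coprime.coprime_dvd_left hab.1.1 h
    have h1 : (a * b).gcd m = a := by
      rw [Nat.Coprime.gcd_mul_right_cancel a hbm, Nat.gcd_eq_left hab.1.1]
    have h2 : (a * b).gcd n = b := by
      rw [Nat.Coprime.gcd_mul_left_cancel b han, Nat.gcd_eq_left hab.2.1]
    simp [h1, h2]
  · intro d hd
    rw [Nat.mem_divisors] at hd
    rw [(Nat.gcd_mul_gcd_eq_iff_dvd_mul_of_coprime h).mpr hd.1]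

lemma sigmaC_one (α β : ℂ) : sigmaC α β 1 = 1 := by
  simp [sigmaC]

lemma sigmaC_mul_coprime (α β : ℂ) {a b : ℕ} (h : Nat.Coprime a b) :
    sigmaC α β (a * b) = sigmaC α β a * sigmaC α β b := by
  unfold sigmaC
  rw [sum_divisors_coprime_mul h, Finset.sum_mul_sum]
  refine Finset.sum_congr rfl fun d1 hd1 => Finset.sum_congr rfl fun d2 hd2 => ?_
  rw [Nat.mem_divisors] at hd1 hd2
  rw [show a * b / (d1 * d2) = a / d1 * (b / d2) from (Nat.div_mul_div_comm hd1.1 hd2.1).symm,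
    natCast_mul_cpow, natCast_mul_cpow]
  ring

/-- geometric-type sum `∑_{t=0}^e x^{e-t} y^t`. -/
noncomputable def Tgeom (x y : ℂ) (e : ℕ) : ℂ := ∑ t ∈ Finset.range (e + 1), x ^ (e - t) * y ^ t

lemma Tgeom_zero (x y : ℂ) : Tgeom x y 0 = 1 := by simp [Tgeom]

lemma Tgeom_one (x y : ℂ) : Tgeom x y 1 = x + y := by
  simp [Tgeom, Finset.sum_range_succ]

lemma Tgeom_succ (x y : ℂ) (e : ℕ) : Tgeom x y (e + 1) = x * Tgeom x y e + y ^ (e + 1) := by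
  unfold Tgeom
  rw [Finset.sum_range_succ, Nat.sub_self, pow_zero, one_mul, Finset.mul_sum]
  congr 1
  refine Finset.sum_congr rfl fun t ht => ?_
  rw [Finset.mem_range] at ht
  rw [show e + 1 - t = (e - t) + 1 by omega, pow_succ', mul_assoc]

lemma Tgeom_rec (x y : ℂ) (e : ℕ) :
    Tgeom x y (e + 2) = (x + y) * Tgeom x y (e + 1) - x * y * Tgeom x y e := by
  rw [show e + 2 = (e + 1) + 1 by rfl, Tgeom_succ x y (e + 1), Tgeom_succ x y e]
  ring

lemma Tgeom_mul (x y : ℂ) (i j : ℕ) :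
    Tgeom x y (i + j + 2) =
      Tgeom x y (i + 1) * Tgeom x y (j + 1) - x * y * Tgeom x y i * Tgeom x y j := by
  induction j generalizing i with
  | zero =>
    rw [show i + 0 + 2 = i + 2 by rfl, Tgeom_rec, Tgeom_one, Tgeom_zero]
    ring
  | succ j ih =>
    rw [show i + (j + 1) + 2 = (i + 1) + j + 2 by ring, ih (i + 1),
      show i + 1 + 1 = i + 2 by rfl, show j + 1 + 1 = j + 2 by rfl,
      Tgeom_rec x y i, Tgeom_rec x y j]
    ring

lemma sigmaC_prime_pow (α β : ℂ) {p : ℕ} (hp : p.Prime) (e : ℕ) :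
    sigmaC α β (p ^ e) = Tgeom ((p : ℂ) ^ (-α)) ((p : ℂ) ^ (-β)) e := by
  unfold sigmaC Tgeom
  rw [Nat.sum_divisors_prime_pow hp]
  refine Finset.sum_congr rfl fun t ht => ?_
  rw [Finset.mem_range] at ht
  rw [Nat.pow_div (by omega) hp.pos, natCast_pow_cpow, natCast_pow_cpow]

/-- The right-hand side of the identity. -/
noncomputable def rhsG (α β : ℂ) (n m : ℕ) : ℂ :=
  ∑ d ∈ (Nat.gcd n m).divisors,
    (ArithmeticFunction.moebius d : ℂ) * (d : ℂ) ^ (-α - β) *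
      sigmaC α β (n / d) * sigmaC α β (m / d)

lemma rhsG_one_right (α β : ℂ) (n : ℕ) (hn : n ≠ 0) :
    rhsG α β n 1 = sigmaC α β n := by
  unfold rhsG
  rw [Nat.gcd_one_right, Nat.divisors_one, Finset.sum_singleton]
  simp [sigmaC_one]

lemma rhsG_one_left (α β : ℂ) (m : ℕ) (hm : m ≠ 0) :
    rhsG α β 1 m = sigmaC α β m := by
  unfold rhsG
  rw [Nat.gcd_one_left, Nat.divisors_one, Finset.sum_singleton]
  simp [sigmaC_one]

lemma rhsG_prime_pow (α β : ℂ) {p : ℕ} (hp : p.Prime) (i j : ℕ) :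
    sigmaC α β (p ^ i * p ^ j) = rhsG α β (p ^ i) (p ^ j) := by
  have hp0 : (p : ℂ) ≠ 0 := Nat.cast_ne_zero.mpr hp.pos.ne'
  set x := (p : ℂ) ^ (-α) with hx
  set y := (p : ℂ) ^ (-β) with hy
  have hxy : (p : ℂ) ^ (-α - β) = x * y := by
    rw [show -α - β = -α + -β by ring, Complex.cpow_add _ _ hp0]
  rcases Nat.eq_zero_or_pos i with rfl | hi
  · rw [pow_zero, one_mul, rhsG_one_left α β _ (pow_ne_zero _ hp.pos.ne')]
  rcases Nat.eq_zero_or_pos j with rfl | hj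
  · rw [pow_zero, mul_one, rhsG_one_right α β _ (pow_ne_zero _ hp.pos.ne')]
  -- both i, j ≥ 1
  obtain ⟨a, rfl⟩ : ∃ a, i = a + 1 := ⟨i - 1, by omega⟩
  obtain ⟨b, rfl⟩ : ∃ b, j = b + 1 := ⟨j - 1, by omega⟩
  unfold rhsG
  have hgcd : Nat.gcd (p ^ (a + 1)) (p ^ (b + 1)) = p ^ (min (a + 1) (b + 1)) := by
    rcases le_total (a + 1) (b + 1) with h | h
    · rw [Nat.gcd_eq_left (pow_dvd_pow p h), min_eq_left h]
    · rw [Nat.gcd_eq_right (pow_dvd_pow p h), min_eq_right h]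
  rw [hgcd]
  obtain ⟨k, hk⟩ : ∃ k, min (a + 1) (b + 1) = k + 1 := ⟨min (a+1) (b+1) - 1, by omega⟩
  rw [hk, Nat.sum_divisors_prime_pow hp, Finset.sum_range_succ', Finset.sum_range_succ']
  have hnil : ∀ t ∈ Finset.range k,
      (ArithmeticFunction.moebius (p ^ (t + 1 + 1)) : ℂ) * (↑(p ^ (t + 1 + 1)) : ℂ) ^ (-α - β) *
        sigmaC α β (p ^ (a + 1) / p ^ (t + 1 + 1)) * sigmaC α β (p ^ (b + 1) / p ^ (t + 1 + 1))
        = 0 := by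
    intro t ht
    rw [ArithmeticFunction.moebius_apply_prime_pow hp (by omega), if_neg (by omega)]
    simp
  rw [Finset.sum_congr rfl hnil, Finset.sum_const, smul_zero, zero_add]
  have hmin1 : (1 : ℕ) ≤ min (a + 1) (b + 1) := by omega
  simp only [zero_add, pow_one, pow_zero]
  rw [ArithmeticFunction.moebius_apply_prime hp]
  have hda : p ^ (a + 1) / p = p ^ a := by
    rw [pow_succ, Nat.mul_div_cancel _ hp.pos]
  have hdb : p ^ (b + 1) / p = p ^ b := by
    rw [pow_succ, Nat.mul_div_cancel _ hp.pos]
  rw [hda, hdb, Nat.div_one, Nat.div_one]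
  rw [← pow_add, sigmaC_prime_pow α β hp, sigmaC_prime_pow α β hp,
    sigmaC_prime_pow α β hp, sigmaC_prime_pow α β hp, sigmaC_prime_pow α β hp]
  rw [show a + 1 + (b + 1) = a + b + 2 by ring, Tgeom_mul, hxy]
  push_cast
  simp [ArithmeticFunction.moebius_apply_one]
  ring

lemma rhsG_mul (α β : ℂ) {n₁ m₁ n₂ m₂ : ℕ}
    (h : Nat.Coprime (n₁ * m₁) (n₂ * m₂)) :
    rhsG α β (n₁ * n₂) (m₁ * m₂) = rhsG α β n₁ m₁ * rhsG α β n₂ m₂ := by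
  have hnn : Nat.Coprime n₁ n₂ :=
    Nat.Coprime.coprime_dvd_right (dvd_mul_right n₂ m₂)
      (Nat.Coprime.coprime_dvd_left (dvd_mul_right n₁ m₁) h)
  have hnm : Nat.Coprime n₁ m₂ :=
    Nat.Coprime.coprime_dvd_right (dvd_mul_left m₂ n₂)
      (Nat.Coprime.coprime_dvd_left (dvd_mul_right n₁ m₁) h)
  have hmn : Nat.Coprime m₁ n₂ :=
    Nat.Coprime.coprime_dvd_right (dvd_mul_right n₂ m₂)
      (Nat.Coprime.coprime_dvd_left (dvd_mul_left m₁ n₁) h)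
  have hmm : Nat.Coprime m₁ m₂ :=
    Nat.Coprime.coprime_dvd_right (dvd_mul_left m₂ n₂)
      (Nat.Coprime.coprime_dvd_left (dvd_mul_left m₁ n₁) h)
  have hgcd : Nat.gcd (n₁ * n₂) (m₁ * m₂) = Nat.gcd n₁ m₁ * Nat.gcd n₂ m₂ := by
    rw [Nat.Coprime.gcd_mul _ hmm, Nat.Coprime.gcd_mul_right_cancel n₁ hmn.symm,
      Nat.Coprime.gcd_mul_left_cancel n₂ hnm]
  have hgcop : Nat.Coprime (Nat.gcd n₁ m₁) (Nat.gcd n₂ m₂) :=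
    Nat.Coprime.coprime_dvd_right (Nat.gcd_dvd_left n₂ m₂)
      (Nat.Coprime.coprime_dvd_left (Nat.gcd_dvd_left n₁ m₁) hnn)
  unfold rhsG
  rw [hgcd, sum_divisors_coprime_mul hgcop, Finset.sum_mul_sum]
  refine Finset.sum_congr rfl fun d₁ hd₁ => Finset.sum_congr rfl fun d₂ hd₂ => ?_
  rw [Nat.mem_divisors] at hd₁ hd₂
  have hd₁n : d₁ ∣ n₁ := hd₁.1.trans (Nat.gcd_dvd_left _ _)
  have hd₁m : d₁ ∣ m₁ := hd₁.1.trans (Nat.gcd_dvd_right _ _)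
  have hd₂n : d₂ ∣ n₂ := hd₂.1.trans (Nat.gcd_dvd_left _ _)
  have hd₂m : d₂ ∣ m₂ := hd₂.1.trans (Nat.gcd_dvd_right _ _)
  have hdd : Nat.Coprime d₁ d₂ :=
    Nat.Coprime.coprime_dvd_right hd₂n (Nat.Coprime.coprime_dvd_left hd₁n hnn)
  have hmoeb : (ArithmeticFunction.moebius (d₁ * d₂) : ℂ) =
      (ArithmeticFunction.moebius d₁ : ℂ) * (ArithmeticFunction.moebius d₂ : ℂ) := by
    rw [ArithmeticFunction.isMultiplicative_moebius.map_mul_of_coprime hdd]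
    push_cast
    ring
  have hdivn : n₁ * n₂ / (d₁ * d₂) = n₁ / d₁ * (n₂ / d₂) :=
    (Nat.div_mul_div_comm hd₁n hd₂n).symm
  have hdivm : m₁ * m₂ / (d₁ * d₂) = m₁ / d₁ * (m₂ / d₂) :=
    (Nat.div_mul_div_comm hd₁m hd₂m).symm
  have hcopn : Nat.Coprime (n₁ / d₁) (n₂ / d₂) :=
    Nat.Coprime.coprime_dvd_right (Nat.div_dvd_of_dvd hd₂n)
      (Nat.Coprime.coprime_dvd_left (Nat.div_dvd_of_dvd hd₁n) hnn)
  have hcopm : Nat.Coprime (m₁ / d₁) (m₂ / d₂) :=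
    Nat.Coprime.coprime_dvd_right (Nat.div_dvd_of_dvd hd₂m)
      (Nat.Coprime.coprime_dvd_left (Nat.div_dvd_of_dvd hd₁m) hmm)
  rw [hmoeb, natCast_mul_cpow, hdivn, hdivm, sigmaC_mul_coprime α β hcopn,
    sigmaC_mul_coprime α β hcopm]
  ring

lemma sigma_eq_rhsG (α β : ℂ) : ∀ N n m : ℕ, n * m ≤ N → 0 < n → 0 < m →
    sigmaC α β (n * m) = rhsG α β n m := by
  intro N
  induction N with
  | zero => intro n m h hn hm; exfalso; have := Nat.mul_pos hn hm; omega
  | succ N ih =>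
    intro n m hle hn hm
    by_cases h1 : n * m = 1
    · have hn1 : n = 1 := Nat.eq_one_of_mul_eq_one_right h1
      have hm1 : m = 1 := Nat.eq_one_of_mul_eq_one_left h1
      subst hn1; subst hm1
      rw [one_mul, rhsG_one_left α β 1 one_ne_zero]
    · obtain ⟨p, hp, hpdvd⟩ := Nat.exists_prime_and_dvd h1
      set i := n.factorization p with hi
      set j := m.factorization p with hj
      set n' := n / p ^ i with hn'
      set m' := m / p ^ j with hm'
      have hsn : p ^ i * n' = n := Nat.ordProj_mul_ordCompl_eq_self n p
      have hsm : p ^ j * m' = m := Nat.ordProj_mul_ordCompl_eq_self m p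
      have hpn' : ¬ p ∣ n' := Nat.not_dvd_ordCompl hp hn.ne'
      have hpm' : ¬ p ∣ m' := Nat.not_dvd_ordCompl hp hm.ne'
      have hn'pos : 0 < n' := Nat.ordCompl_pos p hn.ne'
      have hm'pos : 0 < m' := Nat.ordCompl_pos p hm.ne'
      have hcop : Nat.Coprime (p ^ i * p ^ j) (n' * m') := by
        have h1 : Nat.Coprime p (n' * m') :=
          (Nat.Prime.coprime_iff_not_dvd hp).mpr
            (fun hd => (hp.dvd_mul.mp hd).elim hpn' hpm')
        rw [← pow_add]
        exact Nat.Coprime.pow_left _ h1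
      have hij : 1 ≤ i + j := by
        by_contra hc
        push_neg at hc
        have hi0 : i = 0 := by omega
        have hj0 : j = 0 := by omega
        rw [hi0, pow_zero, one_mul] at hsn
        rw [hj0, pow_zero, one_mul] at hsm
        rcases (Nat.Prime.dvd_mul hp).mp hpdvd with hd | hd
        · exact hpn' (hsn ▸ hd)
        · exact hpm' (hsm ▸ hd)
      have hlt : n' * m' ≤ N := by
        have h2 : 2 ≤ p ^ (i + j) := by
          calc 2 ≤ p := hp.two_le
          _ = p ^ 1 := (pow_one p).symm
          _ ≤ p ^ (i + j) := Nat.pow_le_pow_right hp.pos hij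
        have hNM : n * m = p ^ (i + j) * (n' * m') := by
          rw [← hsn, ← hsm, pow_add]; ring
        nlinarith [Nat.mul_pos hn'pos hm'pos]
      have key : n * m = (p ^ i * p ^ j) * (n' * m') := by
        rw [← hsn, ← hsm]; ring
      calc sigmaC α β (n * m)
          = sigmaC α β (p ^ i * p ^ j) * sigmaC α β (n' * m') := by
            rw [key, sigmaC_mul_coprime α β hcop]
        _ = rhsG α β (p ^ i) (p ^ j) * rhsG α β n' m' := by
            rw [← rhsG_prime_pow α β hp, ih n' m' hlt hn'pos hm'pos]
        _ = rhsG α β (p ^ i * n') (p ^ j * m') := (rhsG_mul α β hcop).symm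
        _ = rhsG α β n m := by rw [hsn, hsm]

end Helpers

/-- For all `α, β ∈ ℂ` and positive integers `m, n`:
`σ_{α,β}(nm) = ∑_{d ∣ gcd(n,m)} μ(d) d^{−α−β} σ_{α,β}(n/d) σ_{α,β}(m/d)`. -/
theorem sigma_of_mul (α β : ℂ) (m n : ℕ) (hm : 0 < m) (hn : 0 < n) :
    sigmaC α β (n * m) =
      ∑ d ∈ (Nat.gcd n m).divisors,
        (ArithmeticFunction.moebius d : ℂ) * (d : ℂ) ^ (-α - β) *
          sigmaC α β (n / d) * sigmaC α β (m / d) := by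
  have h := sigma_eq_rhsG α β (n * m) n m le_rfl hn hm
  unfold rhsG at h
  exact h
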